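/- arXiv:2301.11058 — 6 statements merged into one kernel-verified Lean document; each statement's English description precedes it below -/
import Mathlib

section
/- If L is a left nilpotent Leibniz algebra with one-dimensional commutator ideal [L,L], then [L,L] ⊆ Z(L) and L is a symmetric Leibniz algebra. -/
/-!
Left multiplication kills `[L,L]`: if `[x,[y,z]] ≠ 0`, it spans the one-dimensional
`[L,L]`, so `c = [y,z]` is a multiple of `[x,c]`; then `c` lies in every term of the lower
central series, contradicting nilpotence. The left Leibniz identity then makes `[[x,y],z]`
vanish too, so every bracket of three elements is zero and both claims are immediate.
-/

/-- The lower central series of a Leibniz algebra: `L⁽⁰⁾ = L`,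
`L⁽ᵏ⁺¹⁾ = span [L, L⁽ᵏ⁾]`. -/
def leibnizLCS (F : Type*) [Field F] (L : Type*) [AddCommGroup L] [Module F L]
    (br : L →ₗ[F] L →ₗ[F] L) : ℕ → Submodule F L
  | 0 => ⊤
  | k + 1 => Submodule.span F
      {w : L | ∃ x : L, ∃ y ∈ leibnizLCS F L br k, w = br x y}

section LeibnizAlgebra

variable {F L : Type*} [Field F] [AddCommGroup L] [Module F L] {br : L →ₗ[F] L →ₗ[F] L}

theorem mem_leibnizLCS_of_smul_br_eq {x c : L} {α : F} (h : α • br x c = c) :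
    ∀ k, c ∈ leibnizLCS F L br k
  | 0 => Submodule.mem_top
  | k + 1 => h ▸ Submodule.smul_mem _ α
      (Submodule.subset_span ⟨x, c, mem_leibnizLCS_of_smul_br_eq h k, rfl⟩)

theorem eq_zero_of_smul_br_eq (hnil : ∃ n : ℕ, leibnizLCS F L br n = ⊥) {x c : L} {α : F}
    (h : α • br x c = c) : c = 0 := by
  obtain ⟨n, hn⟩ := hnil
  simpa [hn] using mem_leibnizLCS_of_smul_br_eq h n

theorem exists_smul_eq_of_finrank_span_eq_one {S : Set L}
    (hS : Module.finrank F (Submodule.span F S) = 1) {d c : L} (hd : d ∈ Submodule.span F S)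
    (hd0 : d ≠ 0) (hc : c ∈ Submodule.span F S) : ∃ α : F, α • d = c := by
  have hd0' : (⟨d, hd⟩ : Submodule.span F S) ≠ 0 := by simpa using hd0
  obtain ⟨α, hα⟩ := (finrank_eq_one_iff_of_nonzero' _ hd0').mp hS ⟨c, hc⟩
  exact ⟨α, congrArg Subtype.val hα⟩

theorem br_br_eq_zero_of_finrank_eq_one (hnil : ∃ n : ℕ, leibnizLCS F L br n = ⊥)
    (hdim : Module.finrank F (Submodule.span F {w : L | ∃ x y : L, w = br x y}) = 1)
    (x y z : L) : br x (br y z) = 0 := by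
  by_contra hne
  obtain ⟨α, hα⟩ := exists_smul_eq_of_finrank_span_eq_one hdim
    (Submodule.subset_span ⟨x, br y z, rfl⟩) hne (Submodule.subset_span ⟨y, z, rfl⟩)
  exact hne (by rw [eq_zero_of_smul_br_eq hnil hα, map_zero])

theorem br_br_left_eq_zero_of_br_br_eq_zero
    (hleib : ∀ x y z : L, br x (br y z) = br (br x y) z + br y (br x z))
    (hzero : ∀ x y z : L, br x (br y z) = 0) (x y z : L) : br (br x y) z = 0 := by
  simpa [hzero] using (hleib x y z).symm

end LeibnizAlgebra

theorem nilpotent_one_dim_commutator_central_and_symmetric_general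
    (F : Type*) [Field F]
    (L : Type*) [AddCommGroup L] [Module F L]
    (br : L →ₗ[F] L →ₗ[F] L)
    (hleib : ∀ x y z : L, br x (br y z) = br (br x y) z + br y (br x z))
    (hnil : ∃ n : ℕ, leibnizLCS F L br n = ⊥)
    (hdim : Module.finrank F
      (Submodule.span F {w : L | ∃ x y : L, w = br x y}) = 1) :
    (∀ x y w : L, br (br x y) w = 0 ∧ br w (br x y) = 0) ∧
    (∀ x y z : L, br (br x y) z = br (br x z) y + br x (br y z)) := by
  have hright := br_br_eq_zero_of_finrank_eq_one hnil hdim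
  have hleft := br_br_left_eq_zero_of_br_br_eq_zero hleib hright
  exact ⟨fun x y w => ⟨hleft x y w, hright w x y⟩,
    fun x y z => by rw [hleft, hleft, hright, add_zero]⟩

/-- If `L` is a finite-dimensional left nilpotent Leibniz algebra (over a field of
characteristic ≠ 2) with one-dimensional commutator ideal, then `[L,L] ⊆ Z(L)` and
`L` is a symmetric Leibniz algebra (the right Leibniz identity holds). -/
theorem nilpotent_one_dim_commutator_central_and_symmetric
    (F : Type*) [Field F] (hchar : (2 : F) ≠ 0)
    (L : Type*) [AddCommGroup L] [Module F L] [FiniteDimensional F L]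
    (br : L →ₗ[F] L →ₗ[F] L)
    (hleib : ∀ x y z : L, br x (br y z) = br (br x y) z + br y (br x z))
    (hnil : ∃ n : ℕ, leibnizLCS F L br n = ⊥)
    (hdim : Module.finrank F
      (Submodule.span F {w : L | ∃ x y : L, w = br x y}) = 1) :
    (∀ x y w : L, br (br x y) w = 0 ∧ br w (br x y) = 0) ∧
    (∀ x y z : L, br (br x y) z = br (br x z) y + br x (br y z)) :=
  nilpotent_one_dim_commutator_central_and_symmetric_general F L br hleib hnil hdim
end

section
/- For a left Leibniz algebra L, the set AIDer(L) of almost inner derivations is a Lie subalgebra of Der(L), and Inn(L) ⊆ AIDer(L). -/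
/-!
Derivations of a bilinear bracket are closed under commutators by the usual computation. For
almost inner ones, if `d x = [a, x]` and `e x = [b, x]`, then the derivation rule together with
the left Leibniz identity `[a, [b, x]] = [[a, b], x] + [b, [a, x]]` gives
`[d, e] x = [d a + [a, b] - e b, x]`, so `[d, e]` is again almost inner. That each `ad_x` is a
derivation is the left Leibniz identity itself.
-/

attribute [local instance 100] LieRing.ofAssociativeRing

namespace LeibnizAlgebra

variable {R L : Type*} [CommRing R] [AddCommGroup L] [Module R L] (br : L →ₗ[R] L →ₗ[R] L)

def IsLeftLeibniz : Prop :=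
  ∀ x y z : L, br x (br y z) = br (br x y) z + br y (br x z)

def IsDerivation (d : Module.End R L) : Prop :=
  ∀ x y : L, d (br x y) = br (d x) y + br x (d y)

def IsAlmostInner (d : Module.End R L) : Prop :=
  ∀ x : L, d x ∈ LinearMap.range (br.flip x)

theorem span_brackets_eq_range_flip (x : L) :
    Submodule.span R {w : L | ∃ y : L, w = br y x} = LinearMap.range (br.flip x) := by
  apply le_antisymm
  · rw [Submodule.span_le]
    rintro _ ⟨y, rfl⟩
    exact ⟨y, rfl⟩
  · rintro _ ⟨y, rfl⟩
    exact Submodule.subset_span ⟨y, rfl⟩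

variable {br}

namespace IsDerivation

variable {d e : Module.End R L}

theorem zero : IsDerivation br 0 := fun x y => by simp

theorem add (hd : IsDerivation br d) (he : IsDerivation br e) : IsDerivation br (d + e) :=
  fun x y => by
    simp only [LinearMap.add_apply, hd x y, he x y, map_add, LinearMap.add_apply]
    abel

theorem smul (c : R) (hd : IsDerivation br d) : IsDerivation br (c • d) := fun x y => by
  simp only [LinearMap.smul_apply, hd x y, smul_add, map_smul, LinearMap.smul_apply]

theorem lie (hd : IsDerivation br d) (he : IsDerivation br e) : IsDerivation br ⁅d, e⁆ :=
  fun x y => by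
    simp only [LieRing.of_associative_ring_bracket, LinearMap.sub_apply, Module.End.mul_apply,
      hd _ _, he _ _, map_add, map_sub]
    abel

theorem lie_apply_eq (hleib : IsLeftLeibniz br) (hd : IsDerivation br d)
    (he : IsDerivation br e) {a b x : L} (ha : e x = br a x) (hb : d x = br b x) :
    ⁅d, e⁆ x = br (d a + br a b - e b) x := by
  have hde : d (e x) = br (d a) x + br a (br b x) := by rw [ha, hd, hb]
  have hed : e (d x) = br (e b) x + br b (br a x) := by rw [hb, he, ha]
  calc ⁅d, e⁆ x = d (e x) - e (d x) := rfl
    _ = br (d a) x + br (br a b) x - br (e b) x := by rw [hde, hed, hleib a b x]; abel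
    _ = br (d a + br a b - e b) x := by simp

end IsDerivation

namespace IsAlmostInner

variable {d e : Module.End R L}

theorem zero : IsAlmostInner br 0 := fun _ => zero_mem _

theorem add (hd : IsAlmostInner br d) (he : IsAlmostInner br e) : IsAlmostInner br (d + e) :=
  fun x => add_mem (hd x) (he x)

theorem smul (c : R) (hd : IsAlmostInner br d) : IsAlmostInner br (c • d) :=
  fun x => Submodule.smul_mem _ c (hd x)

theorem lie (hleib : IsLeftLeibniz br) (hd : IsDerivation br d) (he : IsDerivation br e)
    (hd' : IsAlmostInner br d) (he' : IsAlmostInner br e) : IsAlmostInner br ⁅d, e⁆ := by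
  intro x
  obtain ⟨a, ha⟩ := he' x
  obtain ⟨b, hb⟩ := hd' x
  exact ⟨d a + br a b - e b, (hd.lie_apply_eq hleib he ha.symm hb.symm).symm⟩

end IsAlmostInner

variable (br)

def almostInnerDerivations (hleib : IsLeftLeibniz br) : LieSubalgebra R (Module.End R L) where
  carrier := {d | IsDerivation br d ∧ IsAlmostInner br d}
  zero_mem' := ⟨.zero, .zero⟩
  add_mem' hd he := ⟨hd.1.add he.1, hd.2.add he.2⟩
  smul_mem' c _ hd := ⟨hd.1.smul c, hd.2.smul c⟩
  lie_mem' hd he := ⟨hd.1.lie he.1, .lie hleib hd.1 he.1 hd.2 he.2⟩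

theorem mem_almostInnerDerivations (hleib : IsLeftLeibniz br) (d : Module.End R L) :
    d ∈ almostInnerDerivations br hleib ↔ IsDerivation br d ∧ IsAlmostInner br d :=
  Iff.rfl

theorem isAlmostInner_br (x : L) : IsAlmostInner br (br x) := fun _ => ⟨x, rfl⟩

end LeibnizAlgebra

open LeibnizAlgebra in
theorem aider_subalgebra_and_inn_subset_general
    (F : Type*) [Field F]
    (L : Type*) [AddCommGroup L] [Module F L]
    (br : L →ₗ[F] L →ₗ[F] L)
    (hleib : ∀ x y z : L, br x (br y z) = br (br x y) z + br y (br x z)) :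
    (∃ S : LieSubalgebra F (Module.End F L),
      ∀ d : Module.End F L,
        d ∈ S ↔ ((∀ x y : L, d (br x y) = br (d x) y + br x (d y)) ∧
          ∀ x : L, d x ∈ Submodule.span F {w : L | ∃ y : L, w = br y x})) ∧
    (∀ x : L,
      (∀ y z : L, (br x) (br y z) = br ((br x) y) z + br y ((br x) z)) ∧
      ∀ w : L, br x w ∈ Submodule.span F {v : L | ∃ y : L, v = br y w}) := by
  simp only [span_brackets_eq_range_flip]
  exact ⟨⟨almostInnerDerivations br hleib, mem_almostInnerDerivations br hleib⟩,
    fun x => ⟨hleib x, isAlmostInner_br br x⟩⟩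

/-- For a left Leibniz algebra `L`, the almost inner derivations form a Lie subalgebra
of `Der(L) ⊆ gl(L)`, and every inner derivation `ad_x` is almost inner. -/
theorem aider_subalgebra_and_inn_subset
    (F : Type*) [Field F]
    (L : Type*) [AddCommGroup L] [Module F L] [FiniteDimensional F L]
    (br : L →ₗ[F] L →ₗ[F] L)
    (hleib : ∀ x y z : L, br x (br y z) = br (br x y) z + br y (br x z)) :
    (∃ S : LieSubalgebra F (Module.End F L),
      ∀ d : Module.End F L,
        d ∈ S ↔ ((∀ x y : L, d (br x y) = br (d x) y + br x (d y)) ∧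
          ∀ x : L, d x ∈ Submodule.span F {w : L | ∃ y : L, w = br y x})) ∧
    (∀ x : L,
      (∀ y z : L, (br x) (br y z) = br ((br x) y) z + br y ((br x) z)) ∧
      ∀ w : L, br x w ∈ Submodule.span F {v : L | ∃ y : L, v = br y w}) :=
  aider_subalgebra_and_inn_subset_general F L br hleib
end

section
/- In the (2n+1)-dimensional complex Heisenberg Leibniz algebra l_{2n+1}^{J_a} with a ≠ 0, every derivation d satisfies d(z) = (α+β)z where α and β are the diagonal coefficients of d on e_1 and f_1 respectively; more precisely, d has block upper-triangular form with no component from the span of the e_i, f_i into each other's span. -/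
/-- Underlying space of the Heisenberg Leibniz algebra `l_{2n+1}^{J_a}`,
with coordinates in the basis `{e_1,…,e_n, f_1,…,f_n, z}`. -/
abbrev HeisL (n : ℕ) := (Fin n → ℂ) × (Fin n → ℂ) × ℂ

/-- The bracket of `l_{2n+1}^{J_a}`: `[e_i,f_i] = (1+a)z`, `[f_i,e_i] = (-1+a)z`,
`[e_{i+1},f_i] = [f_i,e_{i+1}] = z`, all other brackets zero. -/
noncomputable def hbr (n : ℕ) (a : ℂ) (x y : HeisL n) : HeisL n :=
  (0, 0,
    (∑ i : Fin n, ((1 + a) * x.1 i * y.2.1 i + (-1 + a) * x.2.1 i * y.1 i)) +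
    ∑ i : Fin n,
      (if h : i.1 + 1 < n then
        x.1 ⟨i.1 + 1, h⟩ * y.2.1 i + x.2.1 i * y.1 ⟨i.1 + 1, h⟩
      else 0))

noncomputable def He (n : ℕ) (i : Fin n) : HeisL n := (Pi.single i 1, 0, 0)
noncomputable def Hf (n : ℕ) (i : Fin n) : HeisL n := (0, Pi.single i 1, 0)
noncomputable def Hz (n : ℕ) : HeisL n := (0, 0, 1)

/-!
Every bracket is a multiple of the central element `z`; write `β x y` for its coefficient. Applying
a derivation `d` to `[x, y] = β x y • z` gives `β x y • d z = (β (d x) y + β x (d y)) • z`. Since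
`β (e i) (f i) - β (f i) (e i) = 2`, the pairs `(e i, f i)` and `(f i, e i)` put `d z` in `ℂ z` and
read off its coefficient. For the block `Q i j` (the `f j`-coefficient of `d (e i)`), the pairs
`(e i, e j)` and `(e j, e i)` show that `Q` is symmetric and `2a Q i j + Q i (j-1) + Q j (i-1) = 0`,
so `Q = 0` by induction on `i + j` because `a ≠ 0`. The block from the `f`'s to the `e`'s is the
same with the indices reversed.
-/

section Shift

variable {R : Type*} {n : ℕ}

def shiftUp [Zero R] (g : Fin n → R) (j : Fin n) : R :=
  if h : 0 < j.1 then g ⟨j.1 - 1, by omega⟩ else 0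

def shiftDown [Zero R] (g : Fin n → R) (j : Fin n) : R :=
  if h : j.1 + 1 < n then g ⟨j.1 + 1, h⟩ else 0

@[simp]
lemma shiftUp_zero [Zero R] (j : Fin n) : shiftUp (0 : Fin n → R) j = 0 := by
  simp [shiftUp]

@[simp]
lemma shiftDown_zero [Zero R] (j : Fin n) : shiftDown (0 : Fin n → R) j = 0 := by
  simp [shiftDown]

@[simp]
lemma shiftUp_single_self [Zero R] (j : Fin n) (c : R) : shiftUp (Pi.single j c) j = 0 := by
  unfold shiftUp
  split_ifs
  · exact Pi.single_eq_of_ne (by simp [Fin.ext_iff]; omega) _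
  · rfl

@[simp]
lemma shiftDown_single_self [Zero R] (j : Fin n) (c : R) : shiftDown (Pi.single j c) j = 0 := by
  unfold shiftDown
  split_ifs
  · exact Pi.single_eq_of_ne (by simp [Fin.ext_iff]) _
  · rfl

lemma shiftUp_eq_sum [AddCommMonoid R] (g : Fin n → R) (j : Fin n) :
    shiftUp g j = ∑ i : Fin n, if i.1 + 1 = j.1 then g i else 0 := by
  unfold shiftUp
  split_ifs with hj
  · rw [Finset.sum_eq_single ⟨j.1 - 1, by omega⟩
      (fun i _ hi => if_neg fun h => hi (by ext; simp; omega)) (by simp), if_pos (by simp; omega)]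
  · exact (Finset.sum_eq_zero fun i _ => if_neg (by omega)).symm

lemma shiftDown_rev [Zero R] (g : Fin n → R) (j : Fin n) :
    shiftDown g j.rev = shiftUp (g ∘ Fin.rev) j := by
  unfold shiftDown shiftUp
  simp only [Fin.val_rev, Function.comp_apply]
  split_ifs
  · exact congrArg g (Fin.ext (by simp; omega))
  · omega
  · omega
  · rfl

end Shift

section ShiftEquation

variable {R : Type*} [Semiring R] [NoZeroDivisors R] {n : ℕ} {Q : Fin n → Fin n → R} {c : R}

lemma eq_zero_of_mul_add_shiftUp_add_shiftUp_eq_zero (hc : c ≠ 0)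
    (hQ : ∀ i j, c * Q i j + shiftUp (Q i) j + shiftUp (Q j) i = 0) : Q = 0 := by
  suffices ∀ m, ∀ i j : Fin n, i.1 + j.1 = m → Q i j = 0 from
    funext fun i => funext fun j => this _ i j rfl
  intro m
  induction m using Nat.strong_induction_on with
  | _ m ih =>
    intro i j hm
    have lower : ∀ i j : Fin n, i.1 + j.1 = m → shiftUp (Q i) j = 0 := fun i j hm => by
      unfold shiftUp
      split_ifs
      · exact ih (i.1 + (j.1 - 1)) (by omega) i _ rfl
      · rfl
    have := hQ i j
    rw [lower i j hm, lower j i (by omega), add_zero, add_zero] at this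
    exact (mul_eq_zero.mp this).resolve_left hc

lemma eq_zero_of_mul_add_shiftDown_add_shiftDown_eq_zero (hc : c ≠ 0)
    (hQ : ∀ i j, c * Q i j + shiftDown (Q i) j + shiftDown (Q j) i = 0) : Q = 0 := by
  have hrev : (fun i j : Fin n => Q i.rev j.rev) = 0 :=
    eq_zero_of_mul_add_shiftUp_add_shiftUp_eq_zero hc fun i j => by
      have h := hQ i.rev j.rev
      rwa [shiftDown_rev, shiftDown_rev] at h
  funext i j
  simpa using congrFun (congrFun hrev i.rev) j.rev

end ShiftEquation

section Bracket

variable {n : ℕ} {a : ℂ}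

lemma hbr_eq_smul_Hz (x y : HeisL n) : hbr n a x y = (hbr n a x y).2.2 • Hz n := by
  simp [hbr, Hz]

lemma hbr_He_right (x : HeisL n) (j : Fin n) :
    (hbr n a x (He n j)).2.2 = (-1 + a) * x.2.1 j + shiftUp x.2.1 j := by
  simp only [hbr, He, shiftUp_eq_sum, Pi.zero_apply, mul_zero, zero_add]
  congr 1
  · simp [Pi.single_apply]
  · refine Finset.sum_congr rfl fun i _ => ?_
    simp only [Pi.single_apply, Fin.ext_iff, mul_ite, mul_one, mul_zero]
    split_ifs <;> first | rfl | omega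

lemma hbr_He_left (y : HeisL n) (j : Fin n) :
    (hbr n a (He n j) y).2.2 = (1 + a) * y.2.1 j + shiftUp y.2.1 j := by
  simp only [hbr, He, shiftUp_eq_sum, Pi.zero_apply, mul_zero, zero_mul, add_zero]
  congr 1
  · simp [Pi.single_apply]
  · refine Finset.sum_congr rfl fun i _ => ?_
    simp only [Pi.single_apply, Fin.ext_iff, ite_mul, one_mul, zero_mul]
    split_ifs <;> first | rfl | omega

lemma hbr_Hf_right (x : HeisL n) (j : Fin n) :
    (hbr n a x (Hf n j)).2.2 = (1 + a) * x.1 j + shiftDown x.1 j := by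
  simp only [hbr, Hf, Pi.zero_apply, mul_zero, add_zero]
  congr 1
  · simp [Pi.single_apply]
  · rw [Finset.sum_eq_single j (fun i _ hi => by split_ifs <;> simp [hi]) (by simp)]
    simp [shiftDown]

lemma hbr_Hf_left (y : HeisL n) (j : Fin n) :
    (hbr n a (Hf n j) y).2.2 = (-1 + a) * y.1 j + shiftDown y.1 j := by
  simp only [hbr, Hf, Pi.zero_apply, mul_zero, zero_mul, zero_add]
  congr 1
  · simp [Pi.single_apply]
  · rw [Finset.sum_eq_single j (fun i _ hi => by split_ifs <;> simp [hi]) (by simp)]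
    simp [shiftDown]

lemma hbr_He_He (i j : Fin n) : (hbr n a (He n i) (He n j)).2.2 = 0 := by
  rw [hbr_He_right]
  simp [He]

lemma hbr_Hf_Hf (i j : Fin n) : (hbr n a (Hf n i) (Hf n j)).2.2 = 0 := by
  rw [hbr_Hf_right]
  simp [Hf]

lemma hbr_He_Hf_self (i : Fin n) : (hbr n a (He n i) (Hf n i)).2.2 = 1 + a := by
  simp [hbr_Hf_right, He]

lemma hbr_Hf_He_self (i : Fin n) : (hbr n a (Hf n i) (He n i)).2.2 = -1 + a := by
  simp [hbr_He_right, Hf]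

end Bracket

def IsHbrDerivation (n : ℕ) (a : ℂ) (d : HeisL n →ₗ[ℂ] HeisL n) : Prop :=
  ∀ x y : HeisL n, d (hbr n a x y) = hbr n a (d x) y + hbr n a x (d y)

namespace IsHbrDerivation

variable {n : ℕ} {a : ℂ} {d : HeisL n →ₗ[ℂ] HeisL n}

lemma smul_map_Hz (hd : IsHbrDerivation n a d) (x y : HeisL n) :
    (hbr n a x y).2.2 • d (Hz n) = ((hbr n a (d x) y).2.2 + (hbr n a x (d y)).2.2) • Hz n := by
  have h := hd x y
  rwa [hbr_eq_smul_Hz x y, map_smul, hbr_eq_smul_Hz (d x) y, hbr_eq_smul_Hz x (d y),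
    ← add_smul] at h

lemma hbr_mul_map_Hz (hd : IsHbrDerivation n a d) (x y : HeisL n) :
    (hbr n a x y).2.2 * (d (Hz n)).2.2 = (hbr n a (d x) y).2.2 + (hbr n a x (d y)).2.2 := by
  simpa [Hz] using congrArg (·.2.2) (hd.smul_map_Hz x y)

lemma map_Hz_eq_smul (hd : IsHbrDerivation n a d) (i : Fin n) :
    d (Hz n) = ((d (He n i)).1 i + (d (Hf n i)).2.1 i) • Hz n := by
  have hef := hd.smul_map_Hz (He n i) (Hf n i)
  have hfe := hd.smul_map_Hz (Hf n i) (He n i)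
  rw [hbr_He_Hf_self, hbr_Hf_right, hbr_He_left] at hef
  rw [hbr_Hf_He_self, hbr_He_right, hbr_Hf_left] at hfe
  refine smul_right_injective _ (two_ne_zero (α := ℂ)) ?_
  dsimp only
  rw [smul_smul, show (2 : ℂ) = (1 + a) - (-1 + a) by ring, sub_smul, hef, hfe, ← sub_smul]
  congr 1
  ring

lemma map_He_snd_fst_eq_zero (hd : IsHbrDerivation n a d) (ha : a ≠ 0)
    (i : Fin n) : (d (He n i)).2.1 = 0 := by
  have hrel (i j : Fin n) := hd.hbr_mul_map_Hz (He n i) (He n j)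
  simp only [hbr_He_He, zero_mul] at hrel
  simp only [hbr_He_right, hbr_He_left] at hrel
  -- the antisymmetric part of `hrel` makes `Q` symmetric, the symmetric part is the shift equation
  have hQ := eq_zero_of_mul_add_shiftUp_add_shiftUp_eq_zero (Q := fun i => (d (He n i)).2.1)
    (mul_ne_zero two_ne_zero ha) fun i j => by
      linear_combination (a - 1) / 2 * hrel i j - (1 + a) / 2 * hrel j i
  exact congrFun hQ i

lemma map_Hf_fst_eq_zero (hd : IsHbrDerivation n a d) (ha : a ≠ 0)
    (i : Fin n) : (d (Hf n i)).1 = 0 := by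
  have hrel (i j : Fin n) := hd.hbr_mul_map_Hz (Hf n i) (Hf n j)
  simp only [hbr_Hf_Hf, zero_mul] at hrel
  simp only [hbr_Hf_right, hbr_Hf_left] at hrel
  have hR := eq_zero_of_mul_add_shiftDown_add_shiftDown_eq_zero (Q := fun i => (d (Hf n i)).1)
    (mul_ne_zero two_ne_zero ha) fun i j => by
      linear_combination -(1 + a) / 2 * hrel i j - (1 - a) / 2 * hrel j i
  exact congrFun hR i

end IsHbrDerivation

/-- In `l_{2n+1}^{J_a}` with `a ≠ 0`, every derivation `d` satisfies
`d(z) = (α + β) z`, where `α` (resp. `β`) is the `e_1`-coefficient of `d(e_1)`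
(resp. the `f_1`-coefficient of `d(f_1)`); moreover `d` has block-diagonal form:
`d(e_i)` has no component in the span of the `f_j`'s and `d(f_i)` has no component
in the span of the `e_j`'s. -/
theorem heisenberg_derivation_structure
    (n : ℕ) (hn : 0 < n) (a : ℂ) (ha : a ≠ 0)
    (d : HeisL n →ₗ[ℂ] HeisL n)
    (hd : ∀ x y : HeisL n, d (hbr n a x y) = hbr n a (d x) y + hbr n a x (d y)) :
    d (Hz n) = ((d (He n ⟨0, hn⟩)).1 ⟨0, hn⟩ + (d (Hf n ⟨0, hn⟩)).2.1 ⟨0, hn⟩) • Hz n ∧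
    ∀ i : Fin n, (d (He n i)).2.1 = 0 ∧ (d (Hf n i)).1 = 0 := by
  have hd : IsHbrDerivation n a d := hd
  exact ⟨hd.map_Hz_eq_smul _,
    fun i => ⟨hd.map_He_snd_fst_eq_zero ha i, hd.map_Hf_fst_eq_zero ha i⟩⟩
end

section
/- For the 3-dimensional complex Heisenberg Leibniz algebra l_3^{J_a} with a ∉ {0, 1, −1}, the inner derivations are exactly the maps sending e ↦ μz, f ↦ νz, z ↦ 0 for arbitrary scalars μ, ν; hence dim Inn(l_3^{J_a}) = 2 and every almost inner derivation is inner. -/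
/-- Underlying space of the Heisenberg Leibniz algebra `l_3^{J_a}`,
coordinates in the basis `{e, f, z}`. -/
abbrev L3 := ℂ × ℂ × ℂ

/-- The bracket of `l_3^{J_a}`: `[e,f] = (1+a)z`, `[f,e] = (-1+a)z`. -/
def br3 (a : ℂ) (x y : L3) : L3 :=
  (0, 0, (1 + a) * x.1 * y.2.1 + (-1 + a) * x.2.1 * y.1)

def e3 : L3 := (1, 0, 0)
def f3 : L3 := (0, 1, 0)
def z3 : L3 := (0, 0, 1)

/-! Every bracket lies in `ℂ z` and brackets with `z` vanish, so `ad_w` sends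
`e ↦ (-1+a) w_f z`, `f ↦ (1+a) w_e z`, `z ↦ 0`; since `1 ± a ≠ 0` both coefficients are
arbitrary. Then `ker ad = ℂ z` gives `dim Inn = 3 - 1 = 2`. An almost inner derivation maps
`e, f` into `ℂ z` and `z` to `0`, so it has the shape of an inner one. -/

theorem br3_eq_smul_z3 (a : ℂ) (x y : L3) :
    br3 a x y = ((1 + a) * x.1 * y.2.1 + (-1 + a) * x.2.1 * y.1) • z3 := by
  simp [br3, z3]

theorem br3_e3 (a : ℂ) (w : L3) : br3 a w e3 = ((-1 + a) * w.2.1) • z3 := by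
  simp [br3_eq_smul_z3, e3]

theorem br3_f3 (a : ℂ) (w : L3) : br3 a w f3 = ((1 + a) * w.1) • z3 := by
  simp [br3_eq_smul_z3, f3]

theorem br3_z3 (a : ℂ) (w : L3) : br3 a w z3 = 0 := by
  simp [br3, z3]

theorem z3_ne_zero : z3 ≠ 0 := by
  simp [z3]

theorem L3.linearMap_ext {d d' : L3 →ₗ[ℂ] L3} (he : d e3 = d' e3) (hf : d f3 = d' f3)
    (hz : d z3 = d' z3) : d = d' :=
  LinearMap.prod_ext (LinearMap.ext_ring he)
    (LinearMap.prod_ext (LinearMap.ext_ring hf) (LinearMap.ext_ring hz))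

def ad3 (a : ℂ) : L3 →ₗ[ℂ] L3 →ₗ[ℂ] L3 :=
  LinearMap.mk₂ ℂ (br3 a)
    (fun _ _ _ => by
      simp only [br3, Prod.fst_add, Prod.snd_add, Prod.mk_add_mk, add_zero,
        Prod.mk.injEq, true_and]
      ring)
    (fun _ _ _ => by
      simp only [br3, Prod.smul_fst, Prod.smul_snd, smul_eq_mul, Prod.smul_mk,
        mul_zero, Prod.mk.injEq, true_and]
      ring)
    (fun _ _ _ => by
      simp only [br3, Prod.fst_add, Prod.snd_add, Prod.mk_add_mk, add_zero,
        Prod.mk.injEq, true_and]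
      ring)
    (fun _ _ _ => by
      simp only [br3, Prod.smul_fst, Prod.smul_snd, smul_eq_mul, Prod.smul_mk,
        mul_zero, Prod.mk.injEq, true_and]
      ring)

theorem ad3_apply (a : ℂ) (w y : L3) : ad3 a w y = br3 a w y := rfl

theorem setOf_inner_eq_range_ad3 (a : ℂ) :
    {d : L3 →ₗ[ℂ] L3 | ∃ w : L3, ∀ y : L3, d y = br3 a w y} = Set.range (ad3 a) := by
  ext d
  exact exists_congr fun w => by rw [eq_comm, LinearMap.ext_iff]; rfl

theorem exists_eq_br3_iff {a : ℂ} (hp : (1 : ℂ) + a ≠ 0) (hm : (-1 : ℂ) + a ≠ 0)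
    (d : L3 →ₗ[ℂ] L3) :
    (∃ w : L3, ∀ y : L3, d y = br3 a w y) ↔
      ∃ μ ν : ℂ, d e3 = μ • z3 ∧ d f3 = ν • z3 ∧ d z3 = 0 := by
  constructor
  · rintro ⟨w, hw⟩
    exact ⟨(-1 + a) * w.2.1, (1 + a) * w.1, by rw [hw, br3_e3], by rw [hw, br3_f3],
      by rw [hw, br3_z3]⟩
  · rintro ⟨μ, ν, he, hf, hz⟩
    refine ⟨(ν / (1 + a), μ / (-1 + a), 0), LinearMap.ext_iff.mp (L3.linearMap_ext
      (d' := ad3 a (ν / (1 + a), μ / (-1 + a), 0)) ?_ ?_ ?_)⟩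
    · rw [he, ad3_apply, br3_e3, mul_div_cancel₀ _ hm]
    · rw [hf, ad3_apply, br3_f3, mul_div_cancel₀ _ hp]
    · rw [hz, ad3_apply, br3_z3]

theorem ker_ad3 {a : ℂ} (hp : (1 : ℂ) + a ≠ 0) (hm : (-1 : ℂ) + a ≠ 0) :
    LinearMap.ker (ad3 a) = ℂ ∙ z3 := by
  ext w
  rw [LinearMap.mem_ker, Submodule.mem_span_singleton]
  constructor
  · intro hw
    have h1 : ((1 + a) * w.1) • z3 = 0 := by rw [← br3_f3, ← ad3_apply, hw]; rfl
    have h2 : ((-1 + a) * w.2.1) • z3 = 0 := by rw [← br3_e3, ← ad3_apply, hw]; rfl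
    simp only [smul_eq_zero, z3_ne_zero, or_false, mul_eq_zero, hp, hm, false_or] at h1 h2
    exact ⟨w.2.2, by simp [z3, Prod.ext_iff, h1, h2]⟩
  · rintro ⟨c, rfl⟩
    ext <;> simp [ad3_apply, br3, z3]

theorem finrank_range_ad3 {a : ℂ} (hp : (1 : ℂ) + a ≠ 0) (hm : (-1 : ℂ) + a ≠ 0) :
    Module.finrank ℂ (LinearMap.range (ad3 a)) = 2 := by
  have hrank := LinearMap.finrank_range_add_finrank_ker (ad3 a)
  rw [ker_ad3 hp hm, finrank_span_singleton z3_ne_zero, Module.finrank_prod,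
    Module.finrank_prod, Module.finrank_self] at hrank
  omega

theorem span_br3_left_le (a : ℂ) (x : L3) :
    Submodule.span ℂ {w : L3 | ∃ y : L3, w = br3 a y x} ≤ ℂ ∙ z3 := by
  rw [Submodule.span_le]
  rintro w ⟨y, rfl⟩
  rw [br3_eq_smul_z3]
  exact Submodule.smul_mem _ _ (Submodule.mem_span_singleton_self z3)

theorem span_br3_z3 (a : ℂ) :
    Submodule.span ℂ {w : L3 | ∃ y : L3, w = br3 a y z3} = ⊥ := by
  rw [Submodule.span_eq_bot]
  rintro w ⟨y, rfl⟩
  exact br3_z3 a y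

theorem l3_inner_derivations_general
    (a : ℂ) (ha1 : a ≠ 1) (ha1' : a ≠ -1) :
    (∀ d : L3 →ₗ[ℂ] L3,
      (∃ w : L3, ∀ y : L3, d y = br3 a w y) ↔
      ∃ μ ν : ℂ, d e3 = μ • z3 ∧ d f3 = ν • z3 ∧ d z3 = 0) ∧
    Module.finrank ℂ
      (Submodule.span ℂ {d : L3 →ₗ[ℂ] L3 | ∃ w : L3, ∀ y : L3, d y = br3 a w y}) = 2 ∧
    (∀ d : L3 →ₗ[ℂ] L3,
      (∀ x y : L3, d (br3 a x y) = br3 a (d x) y + br3 a x (d y)) →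
      (∀ x : L3, d x ∈ Submodule.span ℂ {w : L3 | ∃ y : L3, w = br3 a y x}) →
      ∃ w : L3, ∀ y : L3, d y = br3 a w y) := by
  have hp : (1 : ℂ) + a ≠ 0 := fun h => ha1' (by linear_combination h)
  have hm : (-1 : ℂ) + a ≠ 0 := fun h => ha1 (by linear_combination h)
  refine ⟨exists_eq_br3_iff hp hm, ?_, fun d _ hAlmost => ?_⟩
  · rw [setOf_inner_eq_range_ad3, ← LinearMap.coe_range, Submodule.span_eq]
    exact finrank_range_ad3 hp hm
  · obtain ⟨μ, he⟩ := Submodule.mem_span_singleton.mp (span_br3_left_le a e3 (hAlmost e3))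
    obtain ⟨ν, hf⟩ := Submodule.mem_span_singleton.mp (span_br3_left_le a f3 (hAlmost f3))
    have hz := hAlmost z3
    rw [span_br3_z3, Submodule.mem_bot] at hz
    exact (exists_eq_br3_iff hp hm d).mpr ⟨μ, ν, he.symm, hf.symm, hz⟩

/-- For `l_3^{J_a}` with `a ∉ {0, 1, -1}`, the inner derivations are exactly the
linear maps `e ↦ μ z`, `f ↦ ν z`, `z ↦ 0`; hence `Inn(l_3^{J_a})` has dimension 2
and every almost inner derivation is inner. -/
theorem l3_inner_derivations
    (a : ℂ) (ha0 : a ≠ 0) (ha1 : a ≠ 1) (ha1' : a ≠ -1) :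
    (∀ d : L3 →ₗ[ℂ] L3,
      (∃ w : L3, ∀ y : L3, d y = br3 a w y) ↔
      ∃ μ ν : ℂ, d e3 = μ • z3 ∧ d f3 = ν • z3 ∧ d z3 = 0) ∧
    Module.finrank ℂ
      (Submodule.span ℂ {d : L3 →ₗ[ℂ] L3 | ∃ w : L3, ∀ y : L3, d y = br3 a w y}) = 2 ∧
    (∀ d : L3 →ₗ[ℂ] L3,
      (∀ x y : L3, d (br3 a x y) = br3 a (d x) y + br3 a x (d y)) →
      (∀ x : L3, d x ∈ Submodule.span ℂ {w : L3 | ∃ y : L3, w = br3 a y x}) →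
      ∃ w : L3, ∀ y : L3, d y = br3 a w y) :=
  l3_inner_derivations_general a ha1 ha1'
end

section
/- The Heisenberg Leibniz algebras l_{2n+1}^{J_a} and l_{2n+1}^{J_{-a}} are isomorphic as Leibniz algebras for every a ∈ ℂ. -/
variable {R : Type*} [CommRing R] {n : ℕ}

lemma neg_one_pow_mul_self (k : ℕ) : (-1 : R) ^ k * (-1) ^ k = 1 := by
  rw [← mul_pow, neg_one_mul, neg_neg, one_pow]

noncomputable def altRev (R : Type*) [CommRing R] (n : ℕ) : (Fin n → R) ≃ₗ[R] (Fin n → R) where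
  toFun p j := (-1) ^ (j : ℕ) * p j.rev
  invFun p j := (-1) ^ (j.rev : ℕ) * p j.rev
  map_add' p q := by ext j; simp [mul_add]
  map_smul' c p := by ext j; simp [mul_left_comm]
  left_inv p := by ext j; simp [← mul_assoc, neg_one_pow_mul_self]
  right_inv p := by ext j; simp [← mul_assoc, neg_one_pow_mul_self]

lemma altRev_apply (p : Fin n → R) (j : Fin n) : altRev R n p j = (-1) ^ (j : ℕ) * p j.rev :=
  rfl

lemma altRev_dotProduct_altRev (p q : Fin n → R) : altRev R n p ⬝ᵥ altRev R n q = p ⬝ᵥ q := by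
  refine Fintype.sum_equiv Fin.revPerm _ _ fun j => ?_
  simp only [altRev_apply, Fin.revPerm_apply]
  linear_combination p j.rev * q j.rev * neg_one_pow_mul_self (R := R) (j : ℕ)

def shiftPairing (p q : Fin n → R) : R :=
  ∑ i : Fin n, if h : (i : ℕ) + 1 < n then p ⟨i + 1, h⟩ * q i else 0

lemma shiftPairing_succ {m : ℕ} (p q : Fin (m + 1) → R) :
    shiftPairing p q = ∑ i : Fin m, p i.succ * q i.castSucc := by
  rw [shiftPairing, Fin.sum_univ_castSucc, dif_neg (by simp)]
  simp [Fin.succ]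

lemma shiftPairing_altRev (p q : Fin n → R) :
    shiftPairing (altRev R n p) (altRev R n q) = -shiftPairing q p := by
  cases n with
  | zero => simp [shiftPairing]
  | succ m =>
    rw [shiftPairing_succ, shiftPairing_succ, ← Finset.sum_neg_distrib]
    refine Fintype.sum_equiv Fin.revPerm _ _ fun i => ?_
    simp only [altRev_apply, Fin.revPerm_apply, Fin.rev_succ, Fin.rev_castSucc,
      Fin.val_succ, Fin.val_castSucc, pow_succ]
    linear_combination -(q i.rev.succ * p i.rev.castSucc) * neg_one_pow_mul_self (R := R) (i : ℕ)

lemma shiftPairing_neg_left (p q : Fin n → R) : shiftPairing (-p) q = -shiftPairing p q := by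
  simp only [shiftPairing, ← Finset.sum_neg_distrib, Pi.neg_apply, neg_mul]
  congr with i
  split_ifs <;> simp

lemma hbr_eq (n : ℕ) (a : ℂ) (x y : HeisL n) :
    hbr n a x y = (0, 0, (1 + a) * (x.1 ⬝ᵥ y.2.1) + (-1 + a) * (x.2.1 ⬝ᵥ y.1) +
      (shiftPairing x.1 y.2.1 + shiftPairing y.1 x.2.1)) := by
  simp only [hbr, dotProduct, shiftPairing, Finset.mul_sum, ← Finset.sum_add_distrib]
  congr 3 with i
  split_ifs <;> ring

noncomputable def heisNegEquiv (n : ℕ) : HeisL n ≃ₗ[ℂ] HeisL n where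
  toFun x := (-altRev ℂ n x.2.1, altRev ℂ n x.1, x.2.2)
  invFun x := ((altRev ℂ n).symm x.2.1, -(altRev ℂ n).symm x.1, x.2.2)
  map_add' x y := by simp [add_comm]
  map_smul' c x := by simp
  left_inv x := by simp
  right_inv x := by simp

lemma heisNegEquiv_apply (x : HeisL n) :
    heisNegEquiv n x = (-altRev ℂ n x.2.1, altRev ℂ n x.1, x.2.2) :=
  rfl

/-- The Heisenberg Leibniz algebras `l_{2n+1}^{J_a}` and `l_{2n+1}^{J_{-a}}` are
isomorphic for every `a ∈ ℂ`. -/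
theorem heisenberg_iso_neg (n : ℕ) (a : ℂ) :
    ∃ φ : HeisL n ≃ₗ[ℂ] HeisL n,
      ∀ x y : HeisL n, φ (hbr n a x y) = hbr n (-a) (φ x) (φ y) := by
  refine ⟨heisNegEquiv n, fun x y => ?_⟩
  simp only [hbr_eq, heisNegEquiv_apply, map_zero, neg_zero, neg_dotProduct, dotProduct_neg,
    altRev_dotProduct_altRev, shiftPairing_neg_left, shiftPairing_altRev]
  congr 2
  ring
end

section
/- Let L be a left Leibniz algebra with one-dimensional commutator ideal contained in the center. Then every almost inner derivation d of L vanishes on [L,L] and maps L into [L,L]; in particular AIDer(L) is an abelian Lie algebra. -/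
/-! An almost inner derivation sends `x` into the span of the brackets `[y, x]`. These all lie in
`[L, L]`, and they all vanish when `x` is central. Since `[L, L]` is central, any two almost inner
derivations compose to zero in either order. -/

namespace LinearMap

variable {F L : Type*} [CommRing F] [AddCommGroup L] [Module F L] (br : L →ₗ[F] L →ₗ[F] L)

def IsAlmostInner (d : L →ₗ[F] L) : Prop :=
  ∀ x : L, d x ∈ Submodule.span F {w : L | ∃ y : L, w = br y x}

theorem span_left_brackets_le_span_brackets (x : L) :
    Submodule.span F {w : L | ∃ y : L, w = br y x} ≤
      Submodule.span F {w : L | ∃ x y : L, w = br x y} :=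
  Submodule.span_mono fun _ ⟨y, hw⟩ => ⟨y, x, hw⟩

theorem span_left_brackets_eq_bot {x : L} (hx : ∀ y : L, br y x = 0) :
    Submodule.span F {w : L | ∃ y : L, w = br y x} = ⊥ :=
  Submodule.span_eq_bot.2 fun _ ⟨y, hw⟩ => hw ▸ hx y

variable {br}

theorem IsAlmostInner.apply_mem_span_brackets {d : L →ₗ[F] L} (hd : IsAlmostInner br d) (x : L) :
    d x ∈ Submodule.span F {w : L | ∃ x y : L, w = br x y} :=
  span_left_brackets_le_span_brackets br x (hd x)

theorem IsAlmostInner.apply_eq_zero {d : L →ₗ[F] L} (hd : IsAlmostInner br d) {x : L}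
    (hx : ∀ y : L, br y x = 0) : d x = 0 := by
  simpa [span_left_brackets_eq_bot br hx] using hd x

theorem IsAlmostInner.comp_eq_zero {d₁ d₂ : L →ₗ[F] L} (hd₁ : IsAlmostInner br d₁)
    (hd₂ : IsAlmostInner br d₂)
    (hcentral : ∀ v ∈ Submodule.span F {w : L | ∃ x y : L, w = br x y}, ∀ y : L, br y v = 0) :
    d₁ ∘ₗ d₂ = 0 :=
  ext fun x => hd₁.apply_eq_zero (hcentral _ (hd₂.apply_mem_span_brackets x))

end LinearMap

open LinearMap in
theorem aider_abelian_one_dim_central_commutator_general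
    (F : Type*) [Field F]
    (L : Type*) [AddCommGroup L] [Module F L]
    (br : L →ₗ[F] L →ₗ[F] L)
    (C : Submodule F L) (hC : C = Submodule.span F {w : L | ∃ x y : L, w = br x y})
    (hcentral : ∀ v ∈ C, ∀ y : L, br v y = 0 ∧ br y v = 0) :
    (∀ d : L →ₗ[F] L,
      (∀ x y : L, d (br x y) = br (d x) y + br x (d y)) →
      (∀ x : L, d x ∈ Submodule.span F {w : L | ∃ y : L, w = br y x}) →
      (∀ v ∈ C, d v = 0) ∧ (∀ x : L, d x ∈ C)) ∧
    (∀ d₁ d₂ : L →ₗ[F] L,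
      (∀ x y : L, d₁ (br x y) = br (d₁ x) y + br x (d₁ y)) →
      (∀ x : L, d₁ x ∈ Submodule.span F {w : L | ∃ y : L, w = br y x}) →
      (∀ x y : L, d₂ (br x y) = br (d₂ x) y + br x (d₂ y)) →
      (∀ x : L, d₂ x ∈ Submodule.span F {w : L | ∃ y : L, w = br y x}) →
      d₁ ∘ₗ d₂ = d₂ ∘ₗ d₁) := by
  subst hC
  have hcentral' := fun v hv y => (hcentral v hv y).2
  refine ⟨fun d _ hd => ⟨fun v hv => IsAlmostInner.apply_eq_zero hd (hcentral' v hv),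
    IsAlmostInner.apply_mem_span_brackets hd⟩, fun d₁ d₂ _ hd₁ _ hd₂ => ?_⟩
  rw [IsAlmostInner.comp_eq_zero hd₁ hd₂ hcentral', IsAlmostInner.comp_eq_zero hd₂ hd₁ hcentral']

/-- Let `L` be a left Leibniz algebra with one-dimensional commutator ideal contained
in the center. Then every almost inner derivation vanishes on `[L,L]` and maps `L`
into `[L,L]`; in particular `AIDer(L)` is an abelian Lie algebra. -/
theorem aider_abelian_one_dim_central_commutator
    (F : Type*) [Field F]
    (L : Type*) [AddCommGroup L] [Module F L] [FiniteDimensional F L]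
    (br : L →ₗ[F] L →ₗ[F] L)
    (hleib : ∀ x y z : L, br x (br y z) = br (br x y) z + br y (br x z))
    (C : Submodule F L) (hC : C = Submodule.span F {w : L | ∃ x y : L, w = br x y})
    (hdim : Module.finrank F C = 1)
    (hcentral : ∀ v ∈ C, ∀ y : L, br v y = 0 ∧ br y v = 0) :
    (∀ d : L →ₗ[F] L,
      (∀ x y : L, d (br x y) = br (d x) y + br x (d y)) →
      (∀ x : L, d x ∈ Submodule.span F {w : L | ∃ y : L, w = br y x}) →
      (∀ v ∈ C, d v = 0) ∧ (∀ x : L, d x ∈ C)) ∧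
    (∀ d₁ d₂ : L →ₗ[F] L,
      (∀ x y : L, d₁ (br x y) = br (d₁ x) y + br x (d₁ y)) →
      (∀ x : L, d₁ x ∈ Submodule.span F {w : L | ∃ y : L, w = br y x}) →
      (∀ x y : L, d₂ (br x y) = br (d₂ x) y + br x (d₂ y)) →
      (∀ x : L, d₂ x ∈ Submodule.span F {w : L | ∃ y : L, w = br y x}) →
      d₁ ∘ₗ d₂ = d₂ ∘ₗ d₁) :=
  aider_abelian_one_dim_central_commutator_general F L br C hC hcentral
end
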